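/- arXiv:2003.12788 — 3 statements merged into one kernel-verified Lean document; each statement's English description precedes it below -/
import Mathlib

section
/- Let T be a triangulated category and let (f,g,h) be a morphism of distinguished triangles from X →^x Y →^y Z → X[1] to A →^a B →^b C → A[1] (so a∘f = g∘x and b∘g = h∘y and the shifted square commutes). Then f factors through x if and only if h factors through b. -/
open CategoryTheory CategoryTheory.Limits CategoryTheory.Pretriangulated

universe v u

/-! Both factorisations are equivalent to the vanishing of the common composite
`z ≫ f⟦1⟧' = h ≫ c`: for `f` by exactness of `Hom(-, A)` along the first triangle, for `h` by
exactness of `Hom(Z, -)` along the second. -/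

namespace CategoryTheory.Pretriangulated

variable {C : Type u} [Category.{v} C] [Preadditive C] [HasZeroObject C] [HasShift C ℤ]
  [∀ n : ℤ, (CategoryTheory.shiftFunctor C n).Additive] [Pretriangulated C]
  (T : Triangle C) (hT : T ∈ distTriang C)
include hT

/- For `←`, `yoneda_exact₃` on the rotated triangle factors `f⟦1⟧'` through `T.mor₁⟦1⟧'`;
the shift is fully faithful, so this unshifts. -/
lemma Triangle.exists_eq_mor₁_comp_iff {A : C} (f : T.obj₁ ⟶ A) :
    (∃ s : T.obj₂ ⟶ A, f = T.mor₁ ≫ s) ↔ T.mor₃ ≫ f⟦(1 : ℤ)⟧' = 0 := by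
  constructor
  · rintro ⟨s, rfl⟩
    rw [Functor.map_comp, comp_distTriang_mor_zero₃₁_assoc _ hT, zero_comp]
  · intro hf
    obtain ⟨g, hg⟩ : ∃ g : T.obj₂⟦(1 : ℤ)⟧ ⟶ A⟦(1 : ℤ)⟧, f⟦(1 : ℤ)⟧' = T.rotate.mor₃ ≫ g :=
      yoneda_exact₃ _ (rot_of_distTriang _ hT) _ hf
    refine ⟨-(CategoryTheory.shiftFunctor C (1 : ℤ)).preimage g,
      (CategoryTheory.shiftFunctor C (1 : ℤ)).map_injective ?_⟩
    simp only [hg, Functor.map_comp, Functor.map_neg, Functor.map_preimage, Preadditive.comp_neg]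
    exact Preadditive.neg_comp _ _

lemma Triangle.exists_eq_comp_mor₂_iff {Z : C} (h : Z ⟶ T.obj₃) :
    (∃ t : Z ⟶ T.obj₂, h = t ≫ T.mor₂) ↔ h ≫ T.mor₃ = 0 := by
  constructor
  · rintro ⟨t, rfl⟩
    rw [Category.assoc, comp_distTriang_mor_zero₂₃ _ hT, comp_zero]
  · exact coyoneda_exact₃ _ hT h

end CategoryTheory.Pretriangulated

/-- For a morphism (f,g,h) of distinguished triangles
`X → Y → Z → X[1]` to `A → B → C → A[1]`, `f` factors through `x`
iff `h` factors through `b`. -/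
theorem stmt1 {T : Type u} [Category.{v} T] [Preadditive T] [HasZeroObject T]
    [HasShift T ℤ] [∀ n : ℤ, (shiftFunctor T n).Additive] [Pretriangulated T]
    {X Y Z A B C : T}
    (x : X ⟶ Y) (y : Y ⟶ Z) (z : Z ⟶ X⟦(1 : ℤ)⟧)
    (a : A ⟶ B) (b : B ⟶ C) (c : C ⟶ A⟦(1 : ℤ)⟧)
    (hT₁ : Triangle.mk x y z ∈ distTriang T)
    (hT₂ : Triangle.mk a b c ∈ distTriang T)
    (f : X ⟶ A) (g : Y ⟶ B) (h : Z ⟶ C)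
    (comm₁ : x ≫ g = f ≫ a) (comm₂ : y ≫ h = g ≫ b)
    (comm₃ : z ≫ f⟦(1 : ℤ)⟧' = h ≫ c) :
    (∃ s : Y ⟶ A, f = x ≫ s) ↔ (∃ t : Z ⟶ B, h = t ≫ b) :=
  calc (∃ s : Y ⟶ A, f = x ≫ s)
    _ ↔ z ≫ f⟦(1 : ℤ)⟧' = 0 := Triangle.exists_eq_mor₁_comp_iff _ hT₁ f
    _ ↔ h ≫ c = 0 := by rw [comm₃]
    _ ↔ (∃ t : Z ⟶ B, h = t ≫ b) := (Triangle.exists_eq_comp_mor₂_iff _ hT₂ h).symm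
end

section
/- Let A be an abelian category and M an object with Ext¹(M,M) = 0. Suppose 0 → Y → M₀ → X → 0 is a short exact sequence with M₀ ∈ add M, that there is an epimorphism M₁ ↠ Y with M₁ ∈ add M, that Ext¹(X, M) = 0, and that Ext²(X, Y') = 0 where Y' is the kernel of M₁ ↠ Y. Then Ext¹(X, Y) = 0, the sequence 0 → Y → M₀ → X → 0 splits, and X is a direct summand of M₀. -/
/-!
The long exact `Ext(X, -)` sequence of `0 → Y' → M₁ → Y → 0` traps `Ext¹(X, Y)` between
`Ext¹(X, M₁)`, which vanishes because `M₁ ∈ add M` and `Ext¹(X, M) = 0`, and `Ext²(X, Y') = 0`.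
Hence the extension class of `0 → Y → M₀ → X → 0` in `Ext¹(X, Y)` is zero, so `𝟙 X` lifts
along `M₀ → X`.
-/

open CategoryTheory CategoryTheory.Limits

universe w v u

/-- `N` belongs to `add M`: it is a direct summand of a finite direct sum of
copies of `M`. -/
def InAdd {A : Type u} [Category.{v} A] [Abelian A] (M N : A) : Prop :=
  haveI : HasFiniteBiproducts A := HasFiniteBiproducts.of_hasFiniteProducts
  ∃ (n : ℕ) (i : N ⟶ ⨁ (fun _ : Fin n => M)) (r : (⨁ (fun _ : Fin n => M)) ⟶ N),
    i ≫ r = 𝟙 N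

namespace CategoryTheory.Abelian.Ext

variable {A : Type u} [Category.{v} A] [Abelian A] [HasExt.{w} A]

lemma subsingleton_of_retract {X N B : A} {n : ℕ} (i : N ⟶ B) (r : B ⟶ N) (hir : i ≫ r = 𝟙 N)
    [Subsingleton (Ext X B n)] : Subsingleton (Ext X N n) where
  allEq α β := by
    have factor : ∀ γ : Ext X N n,
        γ = (γ.comp (mk₀ i) (add_zero n)).comp (mk₀ r) (add_zero n) := fun γ => by
      rw [comp_assoc_of_third_deg_zero, mk₀_comp_mk₀, hir, comp_mk₀_id]
    rw [factor α, factor β, Subsingleton.elim (α.comp (mk₀ i) _) (β.comp (mk₀ i) _)]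

instance subsingleton_biproduct (X M : A) (k n : ℕ) [HasBiproduct fun _ : Fin k => M]
    [Subsingleton (Ext X M n)] :
    Subsingleton (Ext X (⨁ fun _ : Fin k => M) n) :=
  (addEquivBiproduct X (biproduct.isBilimit fun _ : Fin k => M) n).toEquiv.subsingleton

lemma subsingleton_of_inAdd {X M N : A} {n : ℕ} [Subsingleton (Ext X M n)] (hN : InAdd M N) :
    Subsingleton (Ext X N n) := by
  have : HasFiniteBiproducts A := HasFiniteBiproducts.of_hasFiniteProducts
  obtain ⟨k, i, r, hir⟩ := hN
  exact subsingleton_of_retract i r hir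

lemma subsingleton_of_shortExact {S : ShortComplex A} (hS : S.ShortExact) (X : A) (n : ℕ)
    [Subsingleton (Ext X S.X₂ n)] [Subsingleton (Ext X S.X₁ (n + 1))] :
    Subsingleton (Ext X S.X₃ n) where
  allEq α β := by
    have vanish : ∀ γ : Ext X S.X₃ n, γ = 0 := fun γ => by
      obtain ⟨γ₂, hγ₂⟩ := covariant_sequence_exact₃ X hS γ rfl (Subsingleton.elim _ _)
      rw [← hγ₂, Subsingleton.elim γ₂ 0, zero_comp]
    rw [vanish α, vanish β]

end CategoryTheory.Abelian.Ext

open CategoryTheory.Abelian in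
lemma CategoryTheory.ShortComplex.ShortExact.exists_section_of_subsingleton_ext
    {A : Type u} [Category.{v} A] [Abelian A] [HasExt.{w} A] {S : ShortComplex A}
    (hS : S.ShortExact) [Subsingleton (Ext S.X₃ S.X₁ 1)] :
    ∃ r : S.X₃ ⟶ S.X₂, r ≫ S.g = 𝟙 S.X₃ := by
  obtain ⟨ρ, hρ⟩ := Ext.covariant_sequence_exact₃ S.X₃ hS (Ext.mk₀ (𝟙 S.X₃)) (zero_add 1)
    (Subsingleton.elim _ _)
  refine ⟨Ext.homEquiv₀ ρ, (Ext.mk₀_bijective _ _).1 ?_⟩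
  rw [← Ext.mk₀_comp_mk₀, Ext.mk₀_homEquiv₀_apply, hρ]

theorem stmt4_general {A : Type u} [Category.{v} A] [Abelian A] [HasExt.{w} A]
    (M Y M₀ X M₁ : A)
    (i : Y ⟶ M₀) (p : M₀ ⟶ X) (hw : i ≫ p = 0)
    (hse : (ShortComplex.mk i p hw).ShortExact)
    (q : M₁ ⟶ Y) (hq : Epi q) (hM₁ : InAdd M M₁)
    (h1 : Subsingleton (Abelian.Ext X M 1))
    (h2 : Subsingleton (Abelian.Ext X (kernel q) 2)) :
    Subsingleton (Abelian.Ext X Y 1) ∧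
    (∃ r : X ⟶ M₀, r ≫ p = 𝟙 X) ∧
    (∃ (j : X ⟶ M₀) (r' : M₀ ⟶ X), j ≫ r' = 𝟙 X) := by
  have hker : (ShortComplex.mk (kernel.ι q) q (kernel.condition q)).ShortExact :=
    { exact := ShortComplex.exact_of_f_is_kernel _ (kernelIsKernel q) }
  have : Subsingleton (Abelian.Ext X M₁ 1) := Abelian.Ext.subsingleton_of_inAdd hM₁
  have hXY : Subsingleton (Abelian.Ext X Y 1) := Abelian.Ext.subsingleton_of_shortExact hker X 1
  obtain ⟨r, hr⟩ := hse.exists_section_of_subsingleton_ext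
  exact ⟨hXY, ⟨r, hr⟩, ⟨r, p, hr⟩⟩

/-- if `Ext¹(M,M) = 0`, `0 → Y → M₀ → X → 0` is exact with
`M₀ ∈ add M`, there is an epi `M₁ ↠ Y` with `M₁ ∈ add M`,
`Ext¹(X,M) = 0` and `Ext²(X, ker(M₁ ↠ Y)) = 0`, then `Ext¹(X,Y) = 0`,
the sequence splits and `X` is a direct summand of `M₀`. -/
theorem stmt4 {A : Type u} [Category.{v} A] [Abelian A] [HasExt.{w} A]
    (M Y M₀ X M₁ : A)
    (hMM : Subsingleton (Abelian.Ext M M 1))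
    (i : Y ⟶ M₀) (p : M₀ ⟶ X) (hw : i ≫ p = 0)
    (hse : (ShortComplex.mk i p hw).ShortExact)
    (hM₀ : InAdd M M₀)
    (q : M₁ ⟶ Y) (hq : Epi q) (hM₁ : InAdd M M₁)
    (h1 : Subsingleton (Abelian.Ext X M 1))
    (h2 : Subsingleton (Abelian.Ext X (kernel q) 2)) :
    Subsingleton (Abelian.Ext X Y 1) ∧
    (∃ r : X ⟶ M₀, r ≫ p = 𝟙 X) ∧
    (∃ (j : X ⟶ M₀) (r' : M₀ ⟶ X), j ≫ r' = 𝟙 X) :=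
  stmt4_general M Y M₀ X M₁ i p hw hse q hq hM₁ h1 h2
end

section
/- Let T be a triangulated category and suppose we have a commutative diagram of morphisms of distinguished triangles: (s, r, t) from A →^a B →^b C → A[1] to X →^x Y →^y Z → X[1], followed by (f, g, h) from X → Y → Z → X[1] back to A → B → C → A[1]. If f∘s = 1_A, then B is a direct summand of C ⊕ Y and C is a direct summand of Z ⊕ B. Dually, if h∘t = 1_C, then B is a direct summand of A ⊕ Y and A is a direct summand of X ⊕ B. -/
/-! Compose the two morphisms of triangles to an endomorphism `θ` of `A → B → C → A⟦1⟧`.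
If `θ₁ = 1`, then `a ≫ (1 - θ₂) = 0` and `(1 - θ₃) ≫ c = 0`, so by exactness `1 - θ₂ = b ≫ p`
and `1 - θ₃ = q ≫ b`. Since `θ` factors through `X → Y → Z`, the decompositions
`1_B = b ≫ p + r ≫ g` and `1_C = t ≫ h + q ≫ b` exhibit the direct summands.
The case `θ₃ = 1` is the case `θ₁ = 1` for the inverse rotations of the triangles. -/

open CategoryTheory CategoryTheory.Limits CategoryTheory.Pretriangulated

universe v u

/-- `X` is a direct summand of `Y`. -/
def IsDirectSummand {T : Type u} [Category.{v} T] (X Y : T) : Prop :=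
  ∃ (i : X ⟶ Y) (r : Y ⟶ X), i ≫ r = 𝟙 X

section DirectSummand

variable {C : Type*} [Category C] [Preadditive C] {X Y₁ Y₂ : C}

theorem IsDirectSummand.of_add_eq_id [HasBinaryBiproduct Y₁ Y₂]
    (i₁ : X ⟶ Y₁) (p₁ : Y₁ ⟶ X) (i₂ : X ⟶ Y₂) (p₂ : Y₂ ⟶ X)
    (h : i₁ ≫ p₁ + i₂ ≫ p₂ = 𝟙 X) : IsDirectSummand X (Y₁ ⊞ Y₂) :=
  ⟨biprod.lift i₁ i₂, biprod.desc p₁ p₂, by rw [biprod.lift_desc, h]⟩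

theorem IsDirectSummand.biprod_comm [HasBinaryBiproduct Y₁ Y₂] [HasBinaryBiproduct Y₂ Y₁]
    (h : IsDirectSummand X (Y₁ ⊞ Y₂)) : IsDirectSummand X (Y₂ ⊞ Y₁) := by
  obtain ⟨i, p, hip⟩ := h
  refine .of_add_eq_id (i ≫ biprod.snd) (biprod.inr ≫ p) (i ≫ biprod.fst) (biprod.inl ≫ p) ?_
  calc _ = i ≫ (biprod.fst ≫ biprod.inl + biprod.snd ≫ biprod.inr) ≫ p := by
        rw [Preadditive.add_comp, Preadditive.comp_add, add_comm]
        simp only [Category.assoc]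
    _ = 𝟙 X := by rw [biprod.total, Category.id_comp, hip]

end DirectSummand

namespace CategoryTheory.Pretriangulated

variable {C : Type*} [Category C] [Preadditive C] [HasShift C ℤ] {T₁ T₂ : Triangle C}

theorem invRotate_map_hom₁_comp_eq_id {φ : T₁ ⟶ T₂} {ψ : T₂ ⟶ T₁}
    (h : φ.hom₃ ≫ ψ.hom₃ = 𝟙 _) :
    ((invRotate C).map φ).hom₁ ≫ ((invRotate C).map ψ).hom₁ = 𝟙 _ := by
  rw [← comp_hom₁, ← Functor.map_comp, invRotate_map_hom₁, comp_hom₃, h]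
  exact Functor.map_id _ _

variable [HasZeroObject C] [∀ n : ℤ, (CategoryTheory.shiftFunctor C n).Additive]
  [Pretriangulated C]

theorem Triangle.exists_id_sub_hom₂_eq_mor₂_comp (hT₁ : T₁ ∈ distTriang C) {θ : T₁ ⟶ T₁}
    (hθ : θ.hom₁ = 𝟙 _) : ∃ p : T₁.obj₃ ⟶ T₁.obj₂, 𝟙 _ - θ.hom₂ = T₁.mor₂ ≫ p :=
  T₁.yoneda_exact₂ hT₁ _ (by rw [Preadditive.comp_sub, θ.comm₁, hθ]; simp)

theorem Triangle.exists_id_sub_hom₃_eq_comp_mor₂ (hT₁ : T₁ ∈ distTriang C) {θ : T₁ ⟶ T₁}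
    (hθ : θ.hom₁ = 𝟙 _) : ∃ q : T₁.obj₃ ⟶ T₁.obj₂, 𝟙 _ - θ.hom₃ = q ≫ T₁.mor₂ :=
  T₁.coyoneda_exact₃ hT₁ _ (by rw [Preadditive.sub_comp, ← θ.comm₃, hθ]; simp)

variable [HasBinaryBiproducts C] (φ : T₁ ⟶ T₂) (ψ : T₂ ⟶ T₁)

theorem Triangle.isDirectSummand_obj₂_of_hom₁ (hT₁ : T₁ ∈ distTriang C)
    (h : φ.hom₁ ≫ ψ.hom₁ = 𝟙 _) :
    IsDirectSummand T₁.obj₂ (T₁.obj₃ ⊞ T₂.obj₂) := by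
  obtain ⟨p, hp⟩ := exists_id_sub_hom₂_eq_mor₂_comp hT₁ (θ := φ ≫ ψ) h
  exact .of_add_eq_id T₁.mor₂ p φ.hom₂ ψ.hom₂ (by rw [← hp, comp_hom₂, sub_add_cancel])

theorem Triangle.isDirectSummand_obj₃_of_hom₁ (hT₁ : T₁ ∈ distTriang C)
    (h : φ.hom₁ ≫ ψ.hom₁ = 𝟙 _) :
    IsDirectSummand T₁.obj₃ (T₂.obj₃ ⊞ T₁.obj₂) := by
  obtain ⟨q, hq⟩ := exists_id_sub_hom₃_eq_comp_mor₂ hT₁ (θ := φ ≫ ψ) h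
  exact .of_add_eq_id φ.hom₃ ψ.hom₃ q T₁.mor₂ (by rw [← hq, comp_hom₃, add_sub_cancel])

theorem Triangle.isDirectSummand_obj₂_of_hom₃ (hT₁ : T₁ ∈ distTriang C)
    (h : φ.hom₃ ≫ ψ.hom₃ = 𝟙 _) :
    IsDirectSummand T₁.obj₂ (T₁.obj₁ ⊞ T₂.obj₂) :=
  (isDirectSummand_obj₃_of_hom₁ _ _ (inv_rot_of_distTriang _ hT₁)
    (invRotate_map_hom₁_comp_eq_id h)).biprod_comm

theorem Triangle.isDirectSummand_obj₁_of_hom₃ (hT₁ : T₁ ∈ distTriang C)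
    (h : φ.hom₃ ≫ ψ.hom₃ = 𝟙 _) :
    IsDirectSummand T₁.obj₁ (T₂.obj₁ ⊞ T₁.obj₂) :=
  (isDirectSummand_obj₂_of_hom₁ _ _ (inv_rot_of_distTriang _ hT₁)
    (invRotate_map_hom₁_comp_eq_id h)).biprod_comm

end CategoryTheory.Pretriangulated

/-- given morphisms of distinguished triangles
`(s,r,t) : (A,B,C) → (X,Y,Z)` and `(f,g,h) : (X,Y,Z) → (A,B,C)`,
if `f ∘ s = 1_A` then `B` is a direct summand of `C ⊞ Y` and `C` is a
direct summand of `Z ⊞ B`; if `h ∘ t = 1_C` then `B` is a direct summand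
of `A ⊞ Y` and `A` is a direct summand of `X ⊞ B`. -/
theorem stmt13 {T : Type u} [Category.{v} T] [Preadditive T] [HasZeroObject T]
    [HasShift T ℤ] [∀ n : ℤ, (shiftFunctor T n).Additive] [Pretriangulated T]
    [HasBinaryBiproducts T]
    {A B C X Y Z : T}
    (a : A ⟶ B) (b : B ⟶ C) (c : C ⟶ A⟦(1 : ℤ)⟧)
    (x : X ⟶ Y) (y : Y ⟶ Z) (z : Z ⟶ X⟦(1 : ℤ)⟧)
    (hT₁ : Triangle.mk a b c ∈ distTriang T)
    (hT₂ : Triangle.mk x y z ∈ distTriang T)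
    (s : A ⟶ X) (r : B ⟶ Y) (t : C ⟶ Z)
    (hsr : a ≫ r = s ≫ x) (hrt : b ≫ t = r ≫ y)
    (hts : c ≫ s⟦(1 : ℤ)⟧' = t ≫ z)
    (f : X ⟶ A) (g : Y ⟶ B) (h : Z ⟶ C)
    (hfg : x ≫ g = f ≫ a) (hgh : y ≫ h = g ≫ b)
    (hhf : z ≫ f⟦(1 : ℤ)⟧' = h ≫ c) :
    (s ≫ f = 𝟙 A →
      IsDirectSummand B (C ⊞ Y) ∧ IsDirectSummand C (Z ⊞ B)) ∧
    (t ≫ h = 𝟙 C →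
      IsDirectSummand B (A ⊞ Y) ∧ IsDirectSummand A (X ⊞ B)) := by
  let φ := Triangle.homMk (Triangle.mk a b c) (Triangle.mk x y z) s r t hsr hrt hts
  let ψ := Triangle.homMk (Triangle.mk x y z) (Triangle.mk a b c) f g h hfg hgh hhf
  refine ⟨fun hsf => ⟨?_, ?_⟩, fun hth => ⟨?_, ?_⟩⟩
  · exact Triangle.isDirectSummand_obj₂_of_hom₁ φ ψ hT₁ hsf
  · exact Triangle.isDirectSummand_obj₃_of_hom₁ φ ψ hT₁ hsf
  · exact Triangle.isDirectSummand_obj₂_of_hom₃ φ ψ hT₁ hth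
  · exact Triangle.isDirectSummand_obj₁_of_hom₃ φ ψ hT₁ hth
end
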